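/- arXiv:2110.13239 — 6 statements merged into one kernel-verified Lean document; each statement's English description precedes it below -/
import Mathlib

section
/- Let d ≥ 2 be a natural number, let C ≥ 0, D ≥ 0, α ≥ 0, β ≥ 0 and k > 0 be reals, and let n ∈ ℝ. For each index i with 2 ≤ i ≤ d define G_i to be the set of vectors y : Fin d → ℝ with y j ≥ 0 for all j, y i ∈ [k, k + 2·α·C], y 1 ∈ [n − 2·α·C − k, n − k], and ∑ j, y j ∈ [n − β·D, n + β·D]. Then every vector y : Fin d → ℝ with y j ≥ 0 for all j belongs to at most (2·α·C + β·D + k)/k of the sets G_i; that is, the cardinality of { i : 2 ≤ i ≤ d and y ∈ G_i } is at most (2·α·C + β·D + k)/k. -/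
/-!
If `y` lies in some `G_{i₀}`, then `y₁ ≥ n - 2αC - k` and `∑ yⱼ ≤ n + βD`, so the coordinates
other than the first sum to at most `2αC + βD + k`; every `i` with `y ∈ G_i` contributes a
coordinate `yᵢ ≥ k` to that sum.
-/

open Finset

theorem Finset.sum_add_le_univ_sum_of_notMem {ι : Type*} [Fintype ι] {y : ι → ℝ}
    (hy : ∀ j, 0 ≤ y j) {s : Finset ι} {z : ι} (hz : z ∉ s) :
    ∑ i ∈ s, y i + y z ≤ ∑ j, y j := by
  classical
  calc ∑ i ∈ s, y i + y z = ∑ i ∈ insert z s, y i := by rw [sum_insert hz, add_comm]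
    _ ≤ ∑ j, y j := sum_le_univ_sum_of_nonneg hy

theorem Finset.card_le_div_of_le_coord {ι : Type*} [Fintype ι] {y : ι → ℝ}
    (hy : ∀ j, 0 ≤ y j) {s : Finset ι} {z : ι} (hz : z ∉ s) {k a b : ℝ} (hk : 0 < k)
    (hs : ∀ i ∈ s, k ≤ y i) (hyz : a ≤ y z) (hsum : ∑ j, y j ≤ b) :
    (#s : ℝ) ≤ (b - a) / k := by
  have hcard : #s • k ≤ ∑ i ∈ s, y i := card_nsmul_le_sum s y k hs
  have htotal := sum_add_le_univ_sum_of_notMem hy hz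
  rw [nsmul_eq_mul] at hcard
  rw [le_div_iff₀ hk]
  linarith

/-- Coordinate `⟨0, _⟩` plays the role of the paper's `y 1`, and the indices `i ≠ ⟨0, _⟩` those
of `i = 2, …, d`. -/
theorem overlap_condition
    (d : ℕ) (hd : 2 ≤ d) (C D α β : ℝ) (hC : 0 ≤ C) (hD : 0 ≤ D)
    (hα : 0 ≤ α) (hβ : 0 ≤ β) (k : ℝ) (hk : 0 < k) (n : ℝ)
    (G : Fin d → Set (Fin d → ℝ))
    (hG : ∀ i : Fin d, i ≠ ⟨0, by omega⟩ → G i =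
      {y : Fin d → ℝ | (∀ j, 0 ≤ y j) ∧
        y i ∈ Set.Icc k (k + 2 * α * C) ∧
        y ⟨0, by omega⟩ ∈ Set.Icc (n - 2 * α * C - k) (n - k) ∧
        (∑ j, y j) ∈ Set.Icc (n - β * D) (n + β * D)})
    (y : Fin d → ℝ) :
    (({i : Fin d | i ≠ ⟨0, by omega⟩ ∧ y ∈ G i}.ncard : ℝ))
      ≤ (2 * α * C + β * D + k) / k := by
  set z : Fin d := ⟨0, by omega⟩
  set S : Set (Fin d) := {i : Fin d | i ≠ z ∧ y ∈ G i}
  rcases S.eq_empty_or_nonempty with hS | ⟨i₀, hi₀z, hi₀⟩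
  · rw [hS, Set.ncard_empty, Nat.cast_zero]
    positivity
  obtain ⟨hy, -, hyz, hsum⟩ := (hG i₀ hi₀z ▸ hi₀ :)
  have hz : z ∉ (Set.toFinite S).toFinset := by simp [S]
  have hS : ∀ i ∈ (Set.toFinite S).toFinset, k ≤ y i := by
    intro i hi
    obtain ⟨hiz, hiG⟩ := (Set.Finite.mem_toFinset _).mp hi
    exact (hG i hiz ▸ hiG :).2.1.1
  rw [Set.ncard_eq_toFinset_card S]
  convert card_le_div_of_le_coord hy hz hk hS hyz.1 hsum.2 using 2
  ring
end

section
/- Let d ≥ 1, let a : Fin d → ℝ, and let a_* ≥ 0. Then there exists γ ∈ ℝ with ∑ i, max (a i − γ) 0 = a_*, and for any such γ the vector x defined by x i = max (a i − γ) 0 solves the constrained nonnegative least squares problem: for every y : Fin d → ℝ with y i ≥ 0 for all i and ∑ i, y i = a_*, one has ∑ i, (x i − a i)² ≤ ∑ i, (y i − a i)². -/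
/-!
The threshold `γ` is the Lagrange multiplier of the constraint `∑ xᵢ = a_*`: for each `i`,
`xᵢ = max (aᵢ - γ) 0` minimises `z ↦ (z - aᵢ)² + 2γz = (z - (aᵢ - γ))² + const` over `z ≥ 0`.
Summing over `i`, the multiplier terms cancel because `∑ xᵢ = ∑ yᵢ = a_*`. A threshold exists by
the intermediate value theorem: `γ ↦ ∑ max (aᵢ - γ) 0` is continuous, vanishes for `γ ≥ max aᵢ`,
and is at least `a_*` at `γ = aᵢ - a_*` for any `i`.
-/

open Finset

theorem continuous_sum_max_sub {ι : Type*} [Fintype ι] (a : ι → ℝ) :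
    Continuous fun γ : ℝ => ∑ i, max (a i - γ) 0 :=
  continuous_finsetSum _ fun _ _ => (continuous_const.sub continuous_id).max continuous_const

theorem exists_sum_max_sub_eq {ι : Type*} [Fintype ι] [Nonempty ι] (a : ι → ℝ) {c : ℝ}
    (hc : 0 ≤ c) : ∃ γ : ℝ, ∑ i, max (a i - γ) 0 = c := by
  obtain ⟨i₀⟩ := ‹Nonempty ι›
  obtain ⟨M, hM⟩ : ∃ M, ∀ i, a i ≤ M := Finite.exists_le a
  have h_top : ∑ i, max (a i - M) 0 = 0 :=
    sum_eq_zero fun i _ => max_eq_right (sub_nonpos.2 (hM i))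
  have h_bot : c ≤ ∑ i, max (a i - (a i₀ - c)) 0 :=
    calc c = a i₀ - (a i₀ - c) := by ring
      _ ≤ max (a i₀ - (a i₀ - c)) 0 := le_max_left _ _
      _ ≤ ∑ i, max (a i - (a i₀ - c)) 0 :=
        single_le_sum (f := fun i => max (a i - (a i₀ - c)) 0)
          (fun _ _ => le_max_right _ _) (mem_univ i₀)
  obtain ⟨γ, -, hγ⟩ := intermediate_value_uIcc (continuous_sum_max_sub a).continuousOn
    (Set.mem_uIcc.2 (Or.inr ⟨h_top ▸ hc, h_bot⟩))
  exact ⟨γ, hγ⟩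

theorem sq_max_sub_sub_add_le {a γ y : ℝ} (hy : 0 ≤ y) :
    (max (a - γ) 0 - a) ^ 2 + 2 * γ * max (a - γ) 0 ≤ (y - a) ^ 2 + 2 * γ * y := by
  rcases le_total (a - γ) 0 with h | h
  · rw [max_eq_right h]
    nlinarith
  · rw [max_eq_left h]
    nlinarith [sq_nonneg (y - (a - γ))]

theorem sum_sq_max_sub_sub_le {ι : Type*} [Fintype ι] (a y : ι → ℝ) (γ : ℝ)
    (hy : ∀ i, 0 ≤ y i) (hsum : ∑ i, y i = ∑ i, max (a i - γ) 0) :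
    ∑ i, (max (a i - γ) 0 - a i) ^ 2 ≤ ∑ i, (y i - a i) ^ 2 := by
  have h := sum_le_sum fun i (_ : i ∈ univ) => sq_max_sub_sub_add_le (a := a i) (γ := γ) (hy i)
  simp only [sum_add_distrib, ← mul_sum, hsum] at h
  linarith

/-- The solution to the constrained nonnegative least squares problem
`min ∑ (xᵢ - aᵢ)²` subject to `∑ xᵢ = a_*`, `xᵢ ≥ 0`, is given by
`xᵢ = max (aᵢ - γ) 0` where `γ` is chosen so that `∑ max (aᵢ - γ) 0 = a_*`. -/
theorem cnnls_solution
    (d : ℕ) (hd : 1 ≤ d) (a : Fin d → ℝ) (astar : ℝ) (hastar : 0 ≤ astar) :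
    (∃ γ : ℝ, ∑ i, max (a i - γ) 0 = astar) ∧
    ∀ γ : ℝ, (∑ i, max (a i - γ) 0 = astar) →
      ∀ y : Fin d → ℝ, (∀ i, 0 ≤ y i) → (∑ i, y i) = astar →
        ∑ i, (max (a i - γ) 0 - a i) ^ 2 ≤ ∑ i, (y i - a i) ^ 2 := by
  have : Nonempty (Fin d) := ⟨⟨0, hd⟩⟩
  refine ⟨exists_sum_max_sub_eq a hastar, fun γ hγ y hy hsy => ?_⟩
  exact sum_sq_max_sub_sub_le a y γ hy (hsy.trans hγ.symm)
end

section
/- Let ε > 0 and let d ≥ 1. Let Z 1, …, Z d be independent random variables on a probability space, each distributed according to the Laplace distribution with scale 1/ε. Then E[max over i of (Z i)²] ≤ (1/ε²) · ((ln d)² + 2·ln d + 2). -/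
/-!
By the union bound, `M = maxᵢ |Zᵢ|` has tail `P(M > t) ≤ d e^{-εt}`. Write
`E[M²] = ∫₀^∞ 2t P(M > t) dt` and cut at `s = (log d)/ε`, where the union bound reaches `1`:
below `s` bound the probability by `1`, giving `s²`; above `s` the exponential tail contributes
`2d (s/ε + 1/ε²) e^{-εs} = 2 (s/ε + 1/ε²)`.
-/

open MeasureTheory

/-- The Laplace distribution with scale `1/ε`: the measure on `ℝ` with density
`x ↦ (ε/2) · exp (−ε·|x|)` with respect to Lebesgue measure. -/
noncomputable def laplaceMeasure (ε : ℝ) : Measure ℝ :=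
  volume.withDensity fun x => ENNReal.ofReal ((ε / 2) * Real.exp (-ε * |x|))

open Set Real Filter Topology

lemma laplaceMeasure_Ioi {ε : ℝ} (hε : 0 < ε) {t : ℝ} (ht : 0 ≤ t) :
    laplaceMeasure ε (Ioi t) = ENNReal.ofReal (exp (-ε * t) / 2) := by
  have hint : IntegrableOn (fun x => ε / 2 * exp (-ε * x)) (Ioi t) :=
    (exp_neg_integrableOn_Ioi t hε).const_mul _
  rw [laplaceMeasure, withDensity_apply _ measurableSet_Ioi,
    setLIntegral_congr_fun measurableSet_Ioi (g := fun x => ENNReal.ofReal (ε / 2 * exp (-ε * x)))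
      fun x hx => by rw [abs_of_pos (ht.trans_lt hx)],
    ← ofReal_integral_eq_lintegral_ofReal hint (.of_forall fun x => by positivity),
    integral_const_mul, integral_exp_mul_Ioi (neg_lt_zero.2 hε)]
  congr 1
  field_simp

lemma laplaceMeasure_lt_abs {ε : ℝ} (hε : 0 < ε) {t : ℝ} (ht : 0 ≤ t) :
    laplaceMeasure ε {x | t < |x|} = ENNReal.ofReal (exp (-ε * t)) := by
  set ρ : ℝ → ENNReal := fun x => ENNReal.ofReal (ε / 2 * exp (-ε * |x|))
  have hρ : Measurable ρ := by fun_prop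
  -- `ρ` is even, so the two tails `x > t` and `x < -t` carry the same mass.
  have hsplit : {x : ℝ | t < |x|}.indicator ρ =
      fun x => (Ioi t).indicator ρ x + (Ioi t).indicator ρ (-x) := by
    ext x
    rcases lt_or_ge t x with h | h
    · have : ¬ t < -x := by linarith
      simp [indicator, h, this, lt_abs]
    · by_cases h' : t < -x <;> simp [indicator, h', lt_abs, not_lt.2 h, ρ, abs_neg]
  rw [laplaceMeasure, withDensity_apply', ← lintegral_indicator
      (measurableSet_lt measurable_const continuous_abs.measurable), hsplit,
    lintegral_add_left (hρ.indicator measurableSet_Ioi), lintegral_neg_eq_self, ← two_mul,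
    lintegral_indicator measurableSet_Ioi, ← withDensity_apply _ measurableSet_Ioi]
  change 2 * laplaceMeasure ε (Ioi t) = _
  rw [laplaceMeasure_Ioi hε ht, ← ENNReal.ofReal_ofNat, ← ENNReal.ofReal_mul zero_le_two,
    mul_div_cancel₀ _ two_ne_zero]

lemma measure_lt_ciSup_le_sum {Ω ι α : Type*} [MeasurableSpace Ω] [Fintype ι] [Nonempty ι]
    [ConditionallyCompleteLinearOrder α] (P : Measure Ω) (X : ι → Ω → α) (t : α) :
    P {ω | t < ⨆ i, X i ω} ≤ ∑ i, P {ω | t < X i ω} :=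
  (measure_mono fun _ hω => mem_iUnion.2 (exists_lt_of_lt_ciSup hω)).trans
    (measure_iUnion_fintype_le P _)

lemma hasDerivAt_mul_exp_neg_mul_antideriv {ε : ℝ} (hε : ε ≠ 0) (x : ℝ) :
    HasDerivAt (fun x => -((x / ε + 1 / ε ^ 2) * exp (-ε * x))) (x * exp (-ε * x)) x := by
  have h := (((hasDerivAt_id x).div_const ε).add_const (1 / ε ^ 2)).mul
    ((hasDerivAt_id x).const_mul (-ε)).exp
  refine h.neg.congr_deriv ?_
  simp only [id]
  field_simp
  ring

lemma tendsto_mul_exp_neg_mul_antideriv {ε : ℝ} (hε : 0 < ε) :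
    Tendsto (fun x => -((x / ε + 1 / ε ^ 2) * exp (-ε * x))) atTop (𝓝 0) := by
  have h1 := (tendsto_pow_mul_exp_neg_atTop_nhds_zero 1).comp (tendsto_id.const_mul_atTop hε)
  have h0 := (tendsto_pow_mul_exp_neg_atTop_nhds_zero 0).comp (tendsto_id.const_mul_atTop hε)
  convert ((h1.div_const (ε ^ 2)).add (h0.div_const (ε ^ 2))).neg using 2 with x
  · simp only [Function.comp, id, pow_one, pow_zero, one_mul, neg_mul]
    field_simp
  · simp

lemma lintegral_Ioi_mul_exp_neg_mul {ε : ℝ} (hε : 0 < ε) {a : ℝ} (ha : 0 ≤ a) :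
    ∫⁻ x in Ioi a, ENNReal.ofReal (x * exp (-ε * x)) =
      ENNReal.ofReal ((a / ε + 1 / ε ^ 2) * exp (-ε * a)) := by
  have hderiv : ∀ x ∈ Ici a, HasDerivAt _ _ x :=
    fun x _ => hasDerivAt_mul_exp_neg_mul_antideriv hε.ne' x
  have hnonneg : ∀ x ∈ Ioi a, 0 ≤ x * exp (-ε * x) :=
    fun x hx => mul_nonneg (ha.trans hx.out.le) (exp_pos _).le
  have htend := tendsto_mul_exp_neg_mul_antideriv hε
  rw [← ofReal_integral_eq_lintegral_ofReal
      (integrableOn_Ioi_deriv_of_nonneg' hderiv hnonneg htend)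
      ((ae_restrict_iff' measurableSet_Ioi).2 (.of_forall hnonneg)),
    integral_Ioi_of_hasDerivAt_of_nonneg' hderiv hnonneg htend, zero_sub, neg_neg]

lemma integral_two_mul_eq_sq (x : ℝ) : ∫ t in 0..x, 2 * t = x ^ 2 := by
  rw [_root_.intervalIntegral.integral_const_mul, integral_id]
  ring

lemma lintegral_sq_eq_lintegral_measure_lt {Ω : Type*} [MeasurableSpace Ω] (P : Measure Ω)
    {X : Ω → ℝ} (hX0 : 0 ≤ᵐ[P] X) (hX : AEMeasurable X P) :
    ∫⁻ ω, ENNReal.ofReal (X ω ^ 2) ∂P =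
      ∫⁻ t in Ioi 0, P {ω | t < X ω} * ENNReal.ofReal (2 * t) := by
  have h := lintegral_comp_eq_lintegral_meas_lt_mul (g := fun t => 2 * t) P hX0 hX
    (fun t _ => (by fun_prop : Continuous fun t : ℝ => 2 * t).intervalIntegrable 0 t)
    ((ae_restrict_iff' measurableSet_Ioi).2
      (.of_forall fun t ht => mul_nonneg zero_le_two (le_of_lt ht)))
  simpa only [integral_two_mul_eq_sq] using h

lemma lintegral_sq_le_of_measure_lt_le_mul_exp {Ω : Type*} [MeasurableSpace Ω] {P : Measure Ω}
    [IsProbabilityMeasure P] {X : Ω → ℝ} (hX0 : 0 ≤ᵐ[P] X) (hX : AEMeasurable X P)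
    {C ε : ℝ} (hC : 1 ≤ C) (hε : 0 < ε)
    (htail : ∀ t > 0, P {ω | t < X ω} ≤ ENNReal.ofReal (C * exp (-ε * t))) :
    ∫⁻ ω, ENNReal.ofReal (X ω ^ 2) ∂P ≤
      ENNReal.ofReal ((log C ^ 2 + 2 * log C + 2) / ε ^ 2) := by
  set s := log C / ε
  have hs : 0 ≤ s := div_nonneg (log_nonneg hC) hε.le
  have hCs : C * exp (-ε * s) = 1 := by
    rw [show -ε * s = -log C by simp only [s]; field_simp, exp_neg, exp_log (by linarith)]
    field_simp
  have near : ∫⁻ t in Ioc 0 s, P {ω | t < X ω} * ENNReal.ofReal (2 * t) ≤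
      ENNReal.ofReal (s ^ 2) :=
    calc ∫⁻ t in Ioc 0 s, P {ω | t < X ω} * ENNReal.ofReal (2 * t)
        ≤ ∫⁻ t in Ioc 0 s, ENNReal.ofReal (2 * t) :=
          lintegral_mono fun t => mul_le_of_le_one_left' prob_le_one
      _ = ENNReal.ofReal (s ^ 2) := by
          rw [← ofReal_integral_eq_lintegral_ofReal
              (by fun_prop : Continuous fun t : ℝ => 2 * t).integrableOn_Ioc
              ((ae_restrict_iff' measurableSet_Ioc).2 (.of_forall fun t ht =>
                mul_nonneg zero_le_two ht.1.le)),
            ← intervalIntegral.integral_of_le hs, integral_two_mul_eq_sq]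
  have far : ∫⁻ t in Ioi s, P {ω | t < X ω} * ENNReal.ofReal (2 * t) ≤
      ENNReal.ofReal (2 * (s / ε + 1 / ε ^ 2)) :=
    calc ∫⁻ t in Ioi s, P {ω | t < X ω} * ENNReal.ofReal (2 * t)
        ≤ ∫⁻ t in Ioi s, ENNReal.ofReal (2 * C) * ENNReal.ofReal (t * exp (-ε * t)) := by
          refine setLIntegral_mono' measurableSet_Ioi fun t (ht : s < t) => ?_
          calc P {ω | t < X ω} * ENNReal.ofReal (2 * t)
              ≤ ENNReal.ofReal (C * exp (-ε * t)) * ENNReal.ofReal (2 * t) := by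
                gcongr; exact htail t (hs.trans_lt ht)
            _ = _ := by
                rw [← ENNReal.ofReal_mul (by positivity), ← ENNReal.ofReal_mul (by positivity)]
                congr 1
                ring
      _ = ENNReal.ofReal (2 * (s / ε + 1 / ε ^ 2)) := by
          rw [lintegral_const_mul _ (by fun_prop), lintegral_Ioi_mul_exp_neg_mul hε hs,
            ← ENNReal.ofReal_mul (by positivity)]
          congr 1
          linear_combination (2 * (s / ε + 1 / ε ^ 2)) * hCs
  rw [lintegral_sq_eq_lintegral_measure_lt P hX0 hX, ← Ioc_union_Ioi_eq_Ioi hs,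
    lintegral_union measurableSet_Ioi Ioc_disjoint_Ioi_same]
  calc _ ≤ ENNReal.ofReal (s ^ 2) + ENNReal.ofReal (2 * (s / ε + 1 / ε ^ 2)) :=
        add_le_add near far
    _ = _ := by
      rw [← ENNReal.ofReal_add (by positivity) (by positivity)]
      congr 1
      simp only [s]
      field_simp
      ring

theorem expected_max_sq_laplace_general
    (ε : ℝ) (hε : 0 < ε) (d : ℕ) (hd : 1 ≤ d)
    (Ω : Type*) [MeasurableSpace Ω] (P : Measure Ω) [IsProbabilityMeasure P]
    (Z : Fin d → Ω → ℝ) (hmeas : ∀ i, Measurable (Z i))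
    (hlaw : ∀ i, Measure.map (Z i) P = laplaceMeasure ε) :
    ∫ ω, (⨆ i, (Z i ω) ^ 2) ∂P ≤ (1 / ε ^ 2) * ((Real.log d) ^ 2 + 2 * Real.log d + 2) := by
  have : Nonempty (Fin d) := Fin.pos_iff_nonempty.mp hd
  set M : Ω → ℝ := fun ω => ⨆ i, |Z i ω|
  have hmarginal (i : Fin d) {t : ℝ} (ht : 0 < t) :
      P {ω | t < |Z i ω|} = ENNReal.ofReal (exp (-ε * t)) := by
    rw [← laplaceMeasure_lt_abs hε ht.le, ← hlaw i,
      Measure.map_apply (hmeas i) (measurableSet_lt measurable_const continuous_abs.measurable)]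
    rfl
  have htail (t : ℝ) (ht : t > 0) : P {ω | t < M ω} ≤ ENNReal.ofReal (d * exp (-ε * t)) := by
    refine (measure_lt_ciSup_le_sum P (fun i ω => |Z i ω|) t).trans_eq ?_
    simp_rw [hmarginal _ ht, Finset.sum_const, Finset.card_univ, Fintype.card_fin, nsmul_eq_mul,
      ENNReal.ofReal_mul (Nat.cast_nonneg d), ENNReal.ofReal_natCast]
  have hsq_le (ω : Ω) : ⨆ i, Z i ω ^ 2 ≤ M ω ^ 2 := ciSup_le fun i => by
    rw [← sq_abs]
    exact pow_le_pow_left₀ (abs_nonneg _)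
      (le_ciSup (f := fun j => |Z j ω|) (Finite.bddAbove_range _) i) 2
  have hbound := lintegral_sq_le_of_measure_lt_le_mul_exp
    (.of_forall fun ω => Real.iSup_nonneg fun i => abs_nonneg (Z i ω))
    (Measurable.iSup fun i => (hmeas i).abs).aemeasurable (by exact_mod_cast hd) hε htail
  rw [integral_eq_lintegral_of_nonneg_ae (.of_forall fun ω => Real.iSup_nonneg fun i => sq_nonneg _)
    (Measurable.iSup fun i => (hmeas i).pow_const 2).aestronglyMeasurable, one_div_mul_eq_div]
  exact ENNReal.toReal_le_of_le_ofReal (by positivity)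
    ((lintegral_mono fun ω => ENNReal.ofReal_le_ofReal (hsq_le ω)).trans hbound)

theorem expected_max_sq_laplace
    (ε : ℝ) (hε : 0 < ε) (d : ℕ) (hd : 1 ≤ d)
    (Ω : Type*) [MeasurableSpace Ω] (P : Measure Ω) [IsProbabilityMeasure P]
    (Z : Fin d → Ω → ℝ) (hmeas : ∀ i, Measurable (Z i))
    (hind : ProbabilityTheory.iIndepFun Z P)
    (hlaw : ∀ i, Measure.map (Z i) P = laplaceMeasure ε) :
    ∫ ω, (⨆ i, (Z i ω) ^ 2) ∂P ≤ (1 / ε ^ 2) * ((Real.log d) ^ 2 + 2 * Real.log d + 2) :=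
  expected_max_sq_laplace_general ε hε d hd Ω P Z hmeas hlaw
end

section
/- Let σ > 0 and let d ≥ 2. Let Z 1, …, Z d be independent random variables on a probability space, each distributed according to the Gaussian distribution on ℝ with mean 0 and variance σ². Then E[max over i of |Z i|] ≤ σ · (√(2·ln d) + (4/√(2·π)) · (1/(2·ln d))). -/
/-!
For every threshold `t`, `max_i |Z_i| ≤ t + ∑_i (|Z_i| - t)⁺`, so by linearity of expectation
`E max_i |Z_i| ≤ t + d · E (|Z| - t)⁺` for a single `Z ~ N(0, σ²)`.
Bounding the Gaussian density on `[t, ∞)` by the exponential tilt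
`φ(x) ≤ φ(t) e^{-t(x-t)/σ²}` gives `E (|Z| - t)⁺ ≤ 2 φ(t) σ⁴ / t²`. The choice
`t = σ √(2 log d)` makes `d φ(t) = 1 / (√(2π) σ)`, which yields the claim.
-/

open MeasureTheory ProbabilityTheory

open Real Set

theorem integral_Ioi_comp_sub_right {E : Type*} [NormedAddCommGroup E] [NormedSpace ℝ E]
    (f : ℝ → E) (a : ℝ) : ∫ x in Ioi a, f (x - a) = ∫ x in Ioi 0, f x := by
  rw [← integral_indicator measurableSet_Ioi, ← integral_indicator measurableSet_Ioi,
    ← integral_sub_right_eq_self (indicator (Ioi 0) f) a]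
  congr with x
  simp [indicator, sub_pos]

theorem integral_Ioi_mul_exp_neg_mul {c : ℝ} (hc : 0 < c) :
    ∫ x in Ioi 0, x * exp (-(c * x)) = 1 / c ^ 2 := by
  have := integral_rpow_mul_exp_neg_mul_Ioi two_pos hc
  norm_num at this
  simpa using this

theorem integral_Ioi_sub_mul_exp_neg_mul_sub (a : ℝ) {c : ℝ} (hc : 0 < c) :
    ∫ x in Ioi a, (x - a) * exp (-(c * (x - a))) = 1 / c ^ 2 := by
  rw [integral_Ioi_comp_sub_right (fun x => x * exp (-(c * x))), integral_Ioi_mul_exp_neg_mul hc]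

theorem integrableOn_Ioi_sub_mul_exp_neg_mul_sub (a : ℝ) {c : ℝ} (hc : 0 < c) :
    IntegrableOn (fun x => (x - a) * exp (-(c * (x - a)))) (Ioi a) :=
  Integrable.of_integral_ne_zero <| by
    rw [integral_Ioi_sub_mul_exp_neg_mul_sub a hc]; positivity

-- Completing the square: `x² = t² + 2t(x - t) + (x - t)²`.
theorem gaussianPDFReal_le_mul_exp (v : NNReal) (t x : ℝ) :
    gaussianPDFReal 0 v x ≤ gaussianPDFReal 0 v t * exp (-(t / v * (x - t))) := by
  simp only [gaussianPDFReal, sub_zero, mul_assoc, ← exp_add]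
  gcongr
  have : -t ^ 2 / (2 * v) + -(t / v * (x - t)) = -x ^ 2 / (2 * v) + (x - t) ^ 2 / (2 * v) := by
    ring
  rw [this]
  exact le_add_of_nonneg_right (by positivity)

theorem integral_posPart_abs_sub_gaussianReal_le {v : NNReal} (hv : v ≠ 0) {t : ℝ} (ht : 0 < t) :
    ∫ x, max (|x| - t) 0 ∂gaussianReal 0 v ≤ 2 * gaussianPDFReal 0 v t * (v ^ 2 / t ^ 2) := by
  set c := t / v
  have hc : 0 < c := div_pos ht (by positivity)
  set F := fun y => gaussianPDFReal 0 v y * max (y - t) 0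
  set G := indicator (Ioi t) fun x => gaussianPDFReal 0 v t * ((x - t) * exp (-(c * (x - t))))
  have hF_abs : ∀ x, gaussianPDFReal 0 v x • max (|x| - t) 0 = F |x| := fun x => by
    simp [F, gaussianPDFReal, sq_abs]
  have hFG : ∀ x, F x ≤ G x := fun x => by
    rcases le_or_gt x t with hxt | hxt
    · simp [F, G, hxt, not_lt.mpr hxt]
    · have := gaussianPDFReal_le_mul_exp v t x
      simp only [F, G, indicator_of_mem (mem_Ioi.mpr hxt), max_eq_left (sub_nonneg.mpr hxt.le)]
      calc gaussianPDFReal 0 v x * (x - t)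
          ≤ gaussianPDFReal 0 v t * exp (-(c * (x - t))) * (x - t) := by gcongr
        _ = _ := by ring
  have hG_int : IntegrableOn G (Ioi 0) :=
    (IntegrableOn.integrable_indicator
      ((integrableOn_Ioi_sub_mul_exp_neg_mul_sub t hc).const_mul _) measurableSet_Ioi).integrableOn
  have hG_integral : ∫ x in Ioi 0, G x = gaussianPDFReal 0 v t * (v ^ 2 / t ^ 2) := by
    rw [setIntegral_indicator measurableSet_Ioi, inter_eq_right.mpr (Ioi_subset_Ioi ht.le),
      integral_const_mul, integral_Ioi_sub_mul_exp_neg_mul_sub t hc]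
    simp only [c]
    field_simp
  calc ∫ x, max (|x| - t) 0 ∂gaussianReal 0 v = 2 * ∫ x in Ioi 0, F x := by
        simp_rw [integral_gaussianReal_eq_integral_smul hv, hF_abs, integral_comp_abs]
    _ ≤ 2 * ∫ x in Ioi 0, G x := by
        gcongr 2 * ?_
        exact integral_mono_of_nonneg
          (.of_forall fun x => mul_nonneg (gaussianPDFReal_nonneg 0 v x) (le_max_right _ _))
          hG_int (.of_forall hFG)
    _ = _ := by rw [hG_integral, mul_assoc]

theorem ciSup_le_add_sum_posPart {ι : Type*} [Fintype ι] [Nonempty ι] (f : ι → ℝ) (t : ℝ) :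
    ⨆ i, f i ≤ t + ∑ i, max (f i - t) 0 :=
  ciSup_le fun i => calc
    f i ≤ t + max (f i - t) 0 := by linarith [le_max_left (f i - t) 0]
    _ ≤ t + ∑ j, max (f j - t) 0 := by
      gcongr
      exact Finset.single_le_sum (f := fun j => max (f j - t) 0)
        (fun j _ => le_max_right _ _) (Finset.mem_univ i)

theorem integral_iSup_abs_le_add_card_mul {ι Ω : Type*} [Fintype ι] [Nonempty ι]
    [MeasurableSpace Ω] {P : Measure Ω} [IsProbabilityMeasure P] {X : ι → Ω → ℝ}
    {μ : Measure ℝ} (hX : ∀ i, AEMeasurable (X i) P) (hlaw : ∀ i, P.map (X i) = μ) {t : ℝ}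
    (hint : Integrable (fun x => max (|x| - t) 0) μ) :
    ∫ ω, ⨆ i, |X i ω| ∂P ≤ t + Fintype.card ι * ∫ x, max (|x| - t) 0 ∂μ := by
  have hmeas : AEStronglyMeasurable (fun x : ℝ => max (|x| - t) 0) μ :=
    (by fun_prop : Continuous fun x : ℝ => max (|x| - t) 0).aestronglyMeasurable
  have hint_i : ∀ i, Integrable (fun ω => max (|X i ω| - t) 0) P := fun i =>
    (integrable_map_measure (g := fun x => max (|x| - t) 0) (hlaw i ▸ hmeas) (hX i)).mp
      (hlaw i ▸ hint)
  have hintegral_i : ∀ i, ∫ ω, max (|X i ω| - t) 0 ∂P = ∫ x, max (|x| - t) 0 ∂μ := fun i => by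
    rw [← hlaw i, integral_map (hX i) (hlaw i ▸ hmeas)]
  calc ∫ ω, ⨆ i, |X i ω| ∂P ≤ ∫ ω, t + ∑ i, max (|X i ω| - t) 0 ∂P := by
        refine integral_mono_of_nonneg (.of_forall fun ω => ?_)
          ((integrable_const t).add (integrable_finsetSum _ fun i _ => hint_i i))
          (.of_forall fun ω => ciSup_le_add_sum_posPart _ t)
        exact (abs_nonneg _).trans
          (le_ciSup (Finite.bddAbove_range fun i => |X i ω|) (Classical.arbitrary ι))
    _ = t + Fintype.card ι * ∫ x, max (|x| - t) 0 ∂μ := by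
        rw [integral_add (integrable_const t) (integrable_finsetSum _ fun i _ => hint_i i),
          integral_finsetSum _ fun i _ => hint_i i]
        simp [hintegral_i]

theorem expected_max_abs_gaussian_general
    (σ : ℝ) (hσ : 0 < σ) (d : ℕ) (hd : 2 ≤ d)
    (Ω : Type*) [MeasurableSpace Ω] (P : Measure Ω) [IsProbabilityMeasure P]
    (Z : Fin d → Ω → ℝ) (hmeas : ∀ i, Measurable (Z i))
    (hlaw : ∀ i, Measure.map (Z i) P = gaussianReal 0 ((σ ^ 2).toNNReal)) :
    ∫ ω, (⨆ i, |Z i ω|) ∂P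
      ≤ σ * (Real.sqrt (2 * Real.log d)
              + (4 / Real.sqrt (2 * Real.pi)) * (1 / (2 * Real.log d))) := by
  have : Nonempty (Fin d) := ⟨⟨0, by omega⟩⟩
  have hL : 0 < Real.log d := Real.log_pos (by exact_mod_cast hd)
  set v := (σ ^ 2).toNNReal
  have hv : (v : ℝ) = σ ^ 2 := Real.coe_toNNReal _ (sq_nonneg σ)
  have hv0 : v ≠ 0 := by simpa [v] using hσ.ne'
  -- chosen so that `d · exp (-t² / (2σ²)) = 1`
  set t := σ * √(2 * Real.log d)
  have ht : 0 < t := by positivity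
  have ht2 : t ^ 2 = σ ^ 2 * (2 * Real.log d) := by
    rw [mul_pow, Real.sq_sqrt (by positivity)]
  have hpdf : gaussianPDFReal 0 v t = (√(2 * π) * σ * d)⁻¹ := by
    have hexp : t ^ 2 / (2 * σ ^ 2) = Real.log d := by
      rw [ht2]; field_simp
    rw [gaussianPDFReal, hv, sub_zero, neg_div, hexp, exp_neg, exp_log (by positivity),
      sqrt_mul (by positivity), sqrt_sq hσ.le]
    ring
  have hint : Integrable (fun x => max (|x| - t) 0) (gaussianReal 0 v) :=
    (((memLp_id_gaussianReal 1).integrable le_rfl).abs.sub (integrable_const t)).pos_part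
  calc ∫ ω, (⨆ i, |Z i ω|) ∂P ≤ t + d * ∫ x, max (|x| - t) 0 ∂gaussianReal 0 v := by
        simpa using integral_iSup_abs_le_add_card_mul (fun i => (hmeas i).aemeasurable) hlaw hint
    _ ≤ t + d * (2 * gaussianPDFReal 0 v t * (v ^ 2 / t ^ 2)) := by
        gcongr
        exact integral_posPart_abs_sub_gaussianReal_le hv0 ht
    _ = σ * (√(2 * Real.log d) + (2 / √(2 * π)) * (1 / (2 * Real.log d))) := by
        rw [hpdf, hv, ht2]
        field_simp
        ring
    _ ≤ _ := by gcongr; norm_num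

theorem expected_max_abs_gaussian
    (σ : ℝ) (hσ : 0 < σ) (d : ℕ) (hd : 2 ≤ d)
    (Ω : Type*) [MeasurableSpace Ω] (P : Measure Ω) [IsProbabilityMeasure P]
    (Z : Fin d → Ω → ℝ) (hmeas : ∀ i, Measurable (Z i))
    (hind : iIndepFun Z P)
    (hlaw : ∀ i, Measure.map (Z i) P = gaussianReal 0 ((σ ^ 2).toNNReal)) :
    ∫ ω, (⨆ i, |Z i ω|) ∂P
      ≤ σ * (Real.sqrt (2 * Real.log d)
              + (4 / Real.sqrt (2 * Real.pi)) * (1 / (2 * Real.log d))) :=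
  expected_max_abs_gaussian_general σ hσ d hd Ω P Z hmeas hlaw
end

section
/- Let σ > 0 and let d ≥ 2. Let Z 1, …, Z d be independent random variables on a probability space, each distributed according to the Gaussian distribution on ℝ with mean 0 and variance σ². Then E[max over i of (Z i)²] ≤ σ² · (2·ln d + (4/√(2·π)) · (1/√(2·ln d))). -/
/-!
Pointwise, `max_i Z_i ^ 2 ≤ u ^ 2 + ∑ i, (Z_i ^ 2 - u ^ 2)⁺` for every threshold `u`, so it suffices
to bound the truncated second moment of one centered Gaussian of variance `v` with density `φ`.
On `x > u` we have `x ^ 2 - u ^ 2 ≤ 2 x (x - u)`, and since `x φ = -(v φ)'` one integration by parts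
turns `∫_u^∞ (x - u) x φ` into `v ∫_u^∞ φ ≤ v² φ(u) / u`. Altogether
`E (Z ^ 2 - u ^ 2)⁺ ≤ 4 v² φ(u) / u`, and the choice `u ^ 2 = 2 v log d` makes
`φ(u) = 1 / (d √(2π v))`.
-/

open MeasureTheory ProbabilityTheory
open Set Filter Real
open scoped NNReal Topology

namespace ProbabilityTheory

lemma hasDerivAt_mul_gaussianPDFReal (μ : ℝ) (v : ℝ≥0) (x : ℝ) :
    HasDerivAt (fun y ↦ v * gaussianPDFReal μ v y) (-(x - μ) * gaussianPDFReal μ v x) x := by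
  rcases eq_or_ne v 0 with rfl | hv
  · simpa [gaussianPDFReal_zero_var] using hasDerivAt_const x (0 : ℝ)
  have hexp : HasDerivAt (fun y ↦ -(y - μ) ^ 2 / (2 * (v : ℝ))) (-(x - μ) / v) x := by
    refine ((((hasDerivAt_id' x).sub_const μ).pow 2).neg.div_const (2 * (v : ℝ))).congr_deriv ?_
    field_simp
    ring
  refine ((hexp.exp.const_mul (√(2 * π * v))⁻¹).const_mul (v : ℝ)).congr_deriv ?_
  simp only [gaussianPDFReal]
  field_simp

lemma integrable_pow_mul_gaussianPDFReal (v : ℝ≥0) (n : ℕ) :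
    Integrable (fun x ↦ x ^ n * gaussianPDFReal 0 v x) := by
  rcases eq_or_ne v 0 with rfl | hv
  · simp [gaussianPDFReal_zero_var]
  have hb : 0 < (2 * (v : ℝ))⁻¹ := by positivity
  have hn : (-1 : ℝ) < n := by linarith [n.cast_nonneg (α := ℝ)]
  refine ((integrable_rpow_mul_exp_neg_mul_sq hb hn).const_mul (√(2 * π * v))⁻¹).congr
    (.of_forall fun x ↦ ?_)
  simp only [gaussianPDFReal, rpow_natCast, sub_zero]
  ring_nf

lemma integrable_quadratic_mul_gaussianPDFReal (v : ℝ≥0) (a b c : ℝ) :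
    Integrable (fun x ↦ (a * x ^ 2 + b * x + c) * gaussianPDFReal 0 v x) := by
  refine ((((integrable_pow_mul_gaussianPDFReal v 2).const_mul a).add
    ((integrable_pow_mul_gaussianPDFReal v 1).const_mul b)).add
    ((integrable_pow_mul_gaussianPDFReal v 0).const_mul c)).congr (.of_forall fun x ↦ ?_)
  simp only [Pi.add_apply]
  ring

lemma tendsto_mul_gaussianPDFReal_atTop (v : ℝ≥0) :
    Tendsto (fun x ↦ v * gaussianPDFReal 0 v x) atTop (𝓝 0) := by
  refine tendsto_zero_of_hasDerivAt_of_integrableOn_Ioi (a := 0)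
    (fun x _ ↦ hasDerivAt_mul_gaussianPDFReal 0 v x) ?_ ?_
  · simpa using (integrable_pow_mul_gaussianPDFReal v 1).neg.integrableOn
  · simpa using ((integrable_pow_mul_gaussianPDFReal v 0).const_mul (v : ℝ)).integrableOn

lemma hasDerivAt_neg_mul_gaussianPDFReal (v : ℝ≥0) (x : ℝ) :
    HasDerivAt (fun y ↦ -(v * gaussianPDFReal 0 v y)) (x * gaussianPDFReal 0 v x) x :=
  (hasDerivAt_mul_gaussianPDFReal 0 v x).fun_neg.congr_deriv (by ring)

lemma setIntegral_Ioi_mul_gaussianPDFReal (v : ℝ≥0) (u : ℝ) :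
    ∫ x in Ioi u, x * gaussianPDFReal 0 v x = v * gaussianPDFReal 0 v u := by
  rw [integral_Ioi_of_hasDerivAt_of_tendsto' (fun x _ ↦ hasDerivAt_neg_mul_gaussianPDFReal v x)
    (by simpa using (integrable_pow_mul_gaussianPDFReal v 1).integrableOn)
    (by simpa using (tendsto_mul_gaussianPDFReal_atTop v).neg)]
  ring

lemma setIntegral_Ioi_gaussianPDFReal_le (v : ℝ≥0) {u : ℝ} (hu : 0 < u) :
    ∫ x in Ioi u, gaussianPDFReal 0 v x ≤ v * gaussianPDFReal 0 v u / u := by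
  calc ∫ x in Ioi u, gaussianPDFReal 0 v x
      ≤ ∫ x in Ioi u, x * gaussianPDFReal 0 v x / u := by
        refine setIntegral_mono_on
          (by simpa using (integrable_pow_mul_gaussianPDFReal v 0).integrableOn)
          (by simpa using ((integrable_pow_mul_gaussianPDFReal v 1).div_const u).integrableOn)
          measurableSet_Ioi fun x (hx : u < x) ↦ ?_
        rw [le_div_iff₀ hu, mul_comm]
        exact mul_le_mul_of_nonneg_right hx.le (gaussianPDFReal_nonneg 0 v x)
    _ = v * gaussianPDFReal 0 v u / u := by
        rw [integral_div, setIntegral_Ioi_mul_gaussianPDFReal]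

lemma setIntegral_Ioi_sub_mul_mul_gaussianPDFReal (v : ℝ≥0) (u : ℝ) :
    ∫ x in Ioi u, (x - u) * (x * gaussianPDFReal 0 v x)
      = v * ∫ x in Ioi u, gaussianPDFReal 0 v x := by
  have hint : IntegrableOn (fun x ↦ (x - u) * (x * gaussianPDFReal 0 v x)) (Ioi u) :=
    ((integrable_quadratic_mul_gaussianPDFReal v 1 (-u) 0).congr
      (.of_forall fun x ↦ by ring)).integrableOn
  have hint' : IntegrableOn (fun x ↦ -(v * gaussianPDFReal 0 v x)) (Ioi u) :=
    ((integrable_quadratic_mul_gaussianPDFReal v 0 0 (-v)).congr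
      (.of_forall fun x ↦ by ring)).integrableOn
  have hlim : Tendsto (fun x ↦ (x - u) * -(v * gaussianPDFReal 0 v x)) atTop (𝓝 0) := by
    refine tendsto_zero_of_hasDerivAt_of_integrableOn_Ioi (a := u)
      (fun x _ ↦ ((hasDerivAt_id' x).sub_const u).mul
        (hasDerivAt_neg_mul_gaussianPDFReal v x)) ?_ ?_
    · simpa only [one_mul, Pi.add_def] using hint'.add hint
    · exact ((integrable_quadratic_mul_gaussianPDFReal v 0 (-v) (u * v)).congr
        (.of_forall fun x ↦ by ring)).integrableOn
  rw [integral_Ioi_mul_deriv_eq_deriv_mul (u' := fun _ ↦ 1) (a' := 0) (b' := 0)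
    (fun x _ ↦ (hasDerivAt_id' x).sub_const u) (fun x _ ↦ hasDerivAt_neg_mul_gaussianPDFReal v x)
    hint (by simpa [Pi.mul_def] using hint') ?_ hlim]
  · simp [integral_neg, integral_const_mul]
  · have hcont := (((hasDerivAt_id' u).sub_const u).mul
      (hasDerivAt_neg_mul_gaussianPDFReal v u)).continuousAt
    simpa using hcont.tendsto.mono_left nhdsWithin_le_nhds

lemma setIntegral_Ioi_sq_sub_sq_mul_gaussianPDFReal_le (v : ℝ≥0) {u : ℝ} (hu : 0 < u) :
    ∫ x in Ioi u, (x ^ 2 - u ^ 2) * gaussianPDFReal 0 v x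
      ≤ 2 * v ^ 2 * gaussianPDFReal 0 v u / u := by
  calc ∫ x in Ioi u, (x ^ 2 - u ^ 2) * gaussianPDFReal 0 v x
      ≤ ∫ x in Ioi u, 2 * ((x - u) * (x * gaussianPDFReal 0 v x)) := by
        refine setIntegral_mono_on ?_ ?_ measurableSet_Ioi fun x (hx : u < x) ↦ ?_
        · exact ((integrable_quadratic_mul_gaussianPDFReal v 1 0 (-u ^ 2)).congr
            (.of_forall fun x ↦ by ring)).integrableOn
        · exact ((integrable_quadratic_mul_gaussianPDFReal v 2 (-2 * u) 0).congr
            (.of_forall fun x ↦ by ring)).integrableOn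
        have hφ := gaussianPDFReal_nonneg 0 v x
        nlinarith [mul_nonneg (mul_nonneg (sub_nonneg.2 hx.le) (sub_nonneg.2 hx.le)) hφ]
    _ = 2 * (v * ∫ x in Ioi u, gaussianPDFReal 0 v x) := by
        rw [integral_const_mul, setIntegral_Ioi_sub_mul_mul_gaussianPDFReal]
    _ ≤ 2 * (v * (v * gaussianPDFReal 0 v u / u)) := by
        gcongr
        exact setIntegral_Ioi_gaussianPDFReal_le v hu
    _ = 2 * v ^ 2 * gaussianPDFReal 0 v u / u := by ring

lemma integral_posPart_sq_sub_sq_gaussianReal_le (v : ℝ≥0) {u : ℝ} (hu : 0 < u) :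
    ∫ x, (x ^ 2 - u ^ 2)⁺ ∂gaussianReal 0 v ≤ 4 * v ^ 2 * gaussianPDFReal 0 v u / u := by
  rcases eq_or_ne v 0 with rfl | hv
  · simpa [gaussianReal_zero_var, gaussianPDFReal_zero_var]
      using (negPart_eq_zero.2 (sq_nonneg u)).le
  have heven (x : ℝ) : gaussianPDFReal 0 v x * (x ^ 2 - u ^ 2)⁺
      = gaussianPDFReal 0 v |x| * (|x| ^ 2 - u ^ 2)⁺ := by
    simp only [gaussianPDFReal, sq_abs, sub_zero]
  calc ∫ x, (x ^ 2 - u ^ 2)⁺ ∂gaussianReal 0 v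
      = ∫ x, gaussianPDFReal 0 v x * (x ^ 2 - u ^ 2)⁺ := integral_gaussianReal_eq_integral_smul hv
    _ = 2 * ∫ x in Ioi 0, gaussianPDFReal 0 v x * (x ^ 2 - u ^ 2)⁺ := by
        rw [integral_congr_ae (.of_forall heven)]
        exact integral_comp_abs (f := fun x ↦ gaussianPDFReal 0 v x * (x ^ 2 - u ^ 2)⁺)
    _ = 2 * ∫ x in Ioi u, (x ^ 2 - u ^ 2) * gaussianPDFReal 0 v x := by
        rw [setIntegral_eq_of_subset_of_forall_sdiff_eq_zero measurableSet_Ioi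
          (Ioi_subset_Ioi hu.le) fun x hx ↦ ?_]
        · congr 1
          refine setIntegral_congr_fun measurableSet_Ioi fun x (hx : u < x) ↦ ?_
          rw [posPart_eq_self.2 (by nlinarith), mul_comm]
        · have hxu : x ≤ u := not_lt.1 hx.2
          have hx₀ : 0 < x := hx.1
          rw [posPart_eq_zero.2 (by nlinarith), mul_zero]
    _ ≤ 2 * (2 * v ^ 2 * gaussianPDFReal 0 v u / u) := by
        gcongr
        exact setIntegral_Ioi_sq_sub_sq_mul_gaussianPDFReal_le v hu
    _ = 4 * v ^ 2 * gaussianPDFReal 0 v u / u := by ring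

lemma integral_iSup_le_add_sum_integral_posPart_sub {ι Ω : Type*} [Fintype ι] [Nonempty ι]
    [MeasurableSpace Ω] {P : Measure Ω} [IsProbabilityMeasure P] {X : ι → Ω → ℝ}
    (hX : ∀ i, Integrable (X i) P) (hX₀ : ∀ i ω, 0 ≤ X i ω) (t : ℝ) :
    ∫ ω, ⨆ i, X i ω ∂P ≤ t + ∑ i, ∫ ω, (X i ω - t)⁺ ∂P := by
  have hpos (i : ι) : Integrable (fun ω ↦ (X i ω - t)⁺) P :=
    ((hX i).sub (integrable_const t)).pos_part
  have hsum : Integrable (fun ω ↦ ∑ i, (X i ω - t)⁺) P := integrable_finsetSum _ fun i _ ↦ hpos i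
  calc ∫ ω, ⨆ i, X i ω ∂P ≤ ∫ ω, t + ∑ i, (X i ω - t)⁺ ∂P := by
        refine integral_mono_of_nonneg (.of_forall fun ω ↦ ?_) ((integrable_const t).add hsum)
          (.of_forall fun ω ↦ ?_)
        · exact (hX₀ (Classical.arbitrary ι) ω).trans
            (le_ciSup (f := fun i ↦ X i ω) (Finite.bddAbove_range _) _)
        · refine ciSup_le fun i ↦ ?_
          calc X i ω ≤ t + (X i ω - t)⁺ := by linarith [le_posPart (X i ω - t)]
            _ ≤ t + ∑ j, (X j ω - t)⁺ := by
              gcongr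
              exact Finset.single_le_sum (fun j _ ↦ posPart_nonneg (X j ω - t)) (Finset.mem_univ i)
    _ = t + ∑ i, ∫ ω, (X i ω - t)⁺ ∂P := by
        rw [integral_add (integrable_const t) hsum, integral_finsetSum _ fun i _ ↦ hpos i]
        simp

end ProbabilityTheory

theorem expected_max_sq_gaussian_general
    (σ : ℝ) (hσ : 0 < σ) (d : ℕ) (hd : 2 ≤ d)
    (Ω : Type*) [MeasurableSpace Ω] (P : Measure Ω) [IsProbabilityMeasure P]
    (Z : Fin d → Ω → ℝ) (hmeas : ∀ i, Measurable (Z i))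
    (hlaw : ∀ i, Measure.map (Z i) P = gaussianReal 0 ((σ ^ 2).toNNReal)) :
    ∫ ω, (⨆ i, (Z i ω) ^ 2) ∂P
      ≤ σ ^ 2 * (2 * Real.log d
              + (4 / Real.sqrt (2 * Real.pi)) * (1 / Real.sqrt (2 * Real.log d))) := by
  have : Nonempty (Fin d) := ⟨⟨0, by omega⟩⟩
  have hlog : 0 < log d := log_pos (by exact_mod_cast hd)
  set v := (σ ^ 2).toNNReal
  have hv : (v : ℝ) = σ ^ 2 := coe_toNNReal _ (sq_nonneg σ)
  -- `u` is chosen so that the Gaussian density at `u` is `1 / d` times its peak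
  set u := σ * √(2 * log d)
  have hu : 0 < u := by positivity
  have hu2 : u ^ 2 = 2 * σ ^ 2 * log d := by
    rw [mul_pow, sq_sqrt (by positivity)]; ring
  have hφu : gaussianPDFReal 0 v u = (√(2 * π) * σ)⁻¹ * (d : ℝ)⁻¹ := by
    rw [gaussianPDFReal, sub_zero, hu2, hv, sqrt_mul (by positivity), sqrt_sq hσ.le,
      show -(2 * σ ^ 2 * log d) / (2 * σ ^ 2) = -log d by field_simp, exp_neg,
      exp_log (by positivity)]
  have hsq (i : Fin d) : Integrable (fun ω ↦ Z i ω ^ 2) P := by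
    have := (memLp_id_gaussianReal (μ := 0) (v := v) 2).integrable_sq
    rw [← hlaw i, integrable_map_measure (by fun_prop) (hmeas i).aemeasurable] at this
    exact this
  have hcoord (i : Fin d) :
      ∫ ω, (Z i ω ^ 2 - u ^ 2)⁺ ∂P ≤ 4 * v ^ 2 * gaussianPDFReal 0 v u / u := by
    rw [← integral_map (f := fun x ↦ (x ^ 2 - u ^ 2)⁺) (hmeas i).aemeasurable (by fun_prop), hlaw i]
    exact integral_posPart_sq_sub_sq_gaussianReal_le v hu
  calc ∫ ω, (⨆ i, (Z i ω) ^ 2) ∂P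
      ≤ u ^ 2 + ∑ i, ∫ ω, (Z i ω ^ 2 - u ^ 2)⁺ ∂P :=
        integral_iSup_le_add_sum_integral_posPart_sub hsq (fun i ω ↦ sq_nonneg _) _
    _ ≤ u ^ 2 + ∑ _i : Fin d, 4 * v ^ 2 * gaussianPDFReal 0 v u / u := by
        gcongr with i; exact hcoord i
    _ = _ := by
        rw [Finset.sum_const, Finset.card_univ, Fintype.card_fin, nsmul_eq_mul, hφu, hu2, hv]
        field_simp
        ring

theorem expected_max_sq_gaussian
    (σ : ℝ) (hσ : 0 < σ) (d : ℕ) (hd : 2 ≤ d)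
    (Ω : Type*) [MeasurableSpace Ω] (P : Measure Ω) [IsProbabilityMeasure P]
    (Z : Fin d → Ω → ℝ) (hmeas : ∀ i, Measurable (Z i))
    (hind : iIndepFun Z P)
    (hlaw : ∀ i, Measure.map (Z i) P = gaussianReal 0 ((σ ^ 2).toNNReal)) :
    ∫ ω, (⨆ i, (Z i ω) ^ 2) ∂P
      ≤ σ ^ 2 * (2 * Real.log d
              + (4 / Real.sqrt (2 * Real.pi)) * (1 / Real.sqrt (2 * Real.log d))) :=
  expected_max_sq_gaussian_general σ hσ d hd Ω P Z hmeas hlaw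
end

section
/- Let ε > 0, let δ ∈ (0,1], and let B be a positive integer with B ≥ (2/ε)·ln(4/δ) + 1. Let Z be a random variable with the truncated double geometric distribution TDGeo(ε/2, B). Then for every integer v and every set S ⊆ ℤ: P(v + Z ∈ S) ≤ exp(ε/2) · P((v − 1) + Z ∈ S) + δ/2, and also P((v − 1) + Z ∈ S) ≤ exp(ε/2) · P(v + Z ∈ S) + δ/2. -/
open MeasureTheory

/-- The probability mass function of the truncated double geometric
distribution `TDGeo(ε', B)`: `p(k) = ((1 − e^{−ε'})/(1 + e^{−ε'})) · e^{−ε'·|k|}`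
for `|k| ≤ B − 1`, `p(±B) = e^{−ε'·B}/(1 + e^{−ε'})`, and `p(k) = 0` for `|k| > B`. -/
noncomputable def tdgeo (ε' : ℝ) (B : ℕ) (k : ℤ) : ℝ :=
  if |k| < (B : ℤ) then
    ((1 - Real.exp (-ε')) / (1 + Real.exp (-ε'))) * Real.exp (-ε' * |(k : ℝ)|)
  else if |k| = (B : ℤ) then Real.exp (-ε' * (B : ℝ)) / (1 + Real.exp (-ε'))
  else 0

/-!
Away from the boundary `|k| = B`, moving the argument of the `TDGeo(ε', B)` mass function by one
changes it by at most a factor `e^{ε'}`: in the interior it decays geometrically, and the boundary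
atoms are at least as heavy as the untruncated geometric profile. The two boundary atoms have mass
at most `e^{-ε' B} ≤ δ/4` each by the choice of `B`, and they absorb the additive slack `δ/2`.
-/

open scoped ENNReal
open Real

theorem measure_le_mul_add_of_forall_singleton_le {α : Type*} [MeasurableSpace α] [Countable α]
    [MeasurableSingletonClass α] {μ ν : Measure α} {c : ℝ≥0∞} {D : Set α}
    (h : ∀ k ∉ D, μ {k} ≤ c * ν {k}) (S : Set α) : μ S ≤ c * ν S + μ D := by
  have hSD : μ (S \ D) ≤ c * ν (S \ D) := by
    rw [← Measure.tsum_indicator_apply_singleton μ _ (.of_discrete),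
      ← Measure.tsum_indicator_apply_singleton ν _ (.of_discrete), ← ENNReal.tsum_mul_left]
    refine ENNReal.tsum_le_tsum fun k => ?_
    by_cases hk : k ∈ S \ D
    · simpa [Set.indicator_of_mem hk] using h k hk.2
    · simp [Set.indicator_of_notMem hk]
  calc μ S ≤ μ (S ∩ D) + μ (S \ D) := measure_le_inter_add_sdiff μ S D
    _ ≤ μ D + c * ν S := by
        gcongr
        exacts [Set.inter_subset_right, hSD.trans (by gcongr; exact Set.sdiff_subset)]
    _ = c * ν S + μ D := add_comm _ _

section tdgeo

variable {ε' : ℝ} {B : ℕ} {j k m : ℤ}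

theorem tdgeo_of_abs_lt (hk : |k| < B) :
    tdgeo ε' B k = (1 - exp (-ε')) / (1 + exp (-ε')) * exp (-ε' * |(k : ℝ)|) :=
  if_pos hk

theorem tdgeo_of_abs_eq (hk : |k| = B) : tdgeo ε' B k = exp (-ε' * B) / (1 + exp (-ε')) := by
  rw [tdgeo, if_neg hk.not_lt, if_pos hk]

theorem tdgeo_of_lt_abs (hk : B < |k|) : tdgeo ε' B k = 0 := by
  rw [tdgeo, if_neg (by omega), if_neg hk.ne']

theorem tdgeo_le_of_abs_eq (hk : |k| = B) : tdgeo ε' B k ≤ exp (-ε' * B) := by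
  rw [tdgeo_of_abs_eq hk]
  exact div_le_self (exp_pos _).le (by linarith [exp_pos (-ε')])

theorem tdgeo_nonneg (hε' : 0 ≤ ε') : 0 ≤ tdgeo ε' B k := by
  have : exp (-ε') ≤ 1 := exp_le_one_iff.mpr (by linarith)
  unfold tdgeo
  split_ifs <;> positivity

theorem mul_exp_le_tdgeo (hk : |k| ≤ B) :
    (1 - exp (-ε')) / (1 + exp (-ε')) * exp (-ε' * |(k : ℝ)|) ≤ tdgeo ε' B k := by
  rcases hk.lt_or_eq with hk | hk
  · exact (tdgeo_of_abs_lt hk).ge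
  · have hkB : |(k : ℝ)| = B := by exact_mod_cast hk
    rw [tdgeo_of_abs_eq hk, hkB, div_mul_eq_mul_div, mul_comm]
    gcongr
    exact mul_le_of_le_one_right (exp_pos _).le (by linarith [exp_pos (-ε')])

theorem tdgeo_le_exp_mul (hε' : 0 ≤ ε') (hj : |j| ≠ B) (hm : |m| ≤ |j| + 1) :
    tdgeo ε' B j ≤ exp ε' * tdgeo ε' B m := by
  rcases hj.lt_or_gt with hj | hj
  · have hmj : |(m : ℝ)| ≤ |(j : ℝ)| + 1 := by exact_mod_cast hm
    have : exp (-ε') ≤ 1 := exp_le_one_iff.mpr (by linarith)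
    calc tdgeo ε' B j
        = (1 - exp (-ε')) / (1 + exp (-ε')) * exp (-ε' * |(j : ℝ)|) := tdgeo_of_abs_lt hj
      _ ≤ exp ε' * ((1 - exp (-ε')) / (1 + exp (-ε')) * exp (-ε' * |(m : ℝ)|)) := by
        rw [mul_left_comm, ← exp_add]
        gcongr
        nlinarith
      _ ≤ exp ε' * tdgeo ε' B m := by gcongr; exact mul_exp_le_tdgeo (by omega)
  · rw [tdgeo_of_lt_abs hj]
    exact mul_nonneg (exp_pos _).le (tdgeo_nonneg hε')

end tdgeo

section shift

variable {Ω : Type*} [MeasurableSpace Ω] {P : Measure Ω} {Z : Ω → ℤ}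

theorem map_const_add_apply (hZ : Measurable Z) (u : ℤ) (T : Set ℤ) :
    P.map (fun ω => u + Z ω) T = P {ω | u + Z ω ∈ T} :=
  Measure.map_apply (hZ.const_add u) (.of_discrete)

variable {ε δ : ℝ} {B : ℕ}

theorem measure_abs_eq_le_of_tdgeo (hε : 0 < ε) (hδ : 0 < δ) (hB : 2 / ε * log (4 / δ) ≤ B)
    (hlaw : ∀ k : ℤ, P {ω | Z ω = k} = ENNReal.ofReal (tdgeo (ε / 2) B k)) :
    P {ω | |Z ω| = B} ≤ ENNReal.ofReal (δ / 2) := by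
  have hlog : log (4 / δ) ≤ ε / 2 * B := by
    rw [div_mul_eq_mul_div, div_le_iff₀ hε] at hB
    linarith
  have hk {k : ℤ} (hk : |k| = B) : P {ω | Z ω = k} ≤ ENNReal.ofReal (δ / 4) := by
    rw [hlaw]
    refine ENNReal.ofReal_le_ofReal ?_
    calc tdgeo (ε / 2) B k ≤ exp (-(ε / 2) * B) := tdgeo_le_of_abs_eq hk
      _ ≤ exp (-log (4 / δ)) := by gcongr; linarith
      _ = δ / 4 := by rw [exp_neg, exp_log (by positivity), inv_div]
  have hsplit : {ω | |Z ω| = B} = {ω | Z ω = B} ∪ {ω | Z ω = -B} := by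
    ext ω; simp [abs_eq (Int.natCast_nonneg B)]
  calc P {ω | |Z ω| = B} ≤ P {ω | Z ω = B} + P {ω | Z ω = -B} :=
        hsplit ▸ measure_union_le _ _
    _ ≤ ENNReal.ofReal (δ / 4) + ENNReal.ofReal (δ / 4) :=
        add_le_add (hk (by simp)) (hk (by simp))
    _ = ENNReal.ofReal (δ / 2) := by
        rw [← ENNReal.ofReal_add (by positivity) (by positivity)]
        congr 1
        ring

theorem measure_const_add_mem_le_of_tdgeo (hε : 0 < ε) (hδ : 0 < δ)
    (hB : 2 / ε * log (4 / δ) ≤ B) (hZ : Measurable Z)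
    (hlaw : ∀ k : ℤ, P {ω | Z ω = k} = ENNReal.ofReal (tdgeo (ε / 2) B k))
    {u w : ℤ} (huw : |u - w| ≤ 1) (S : Set ℤ) :
    P {ω | u + Z ω ∈ S} ≤ ENNReal.ofReal (exp (ε / 2)) * P {ω | w + Z ω ∈ S}
      + ENNReal.ofReal (δ / 2) := by
  have hsingleton (a k : ℤ) :
      P.map (fun ω => a + Z ω) {k} = ENNReal.ofReal (tdgeo (ε / 2) B (k - a)) := by
    rw [map_const_add_apply hZ, ← hlaw]
    congr 1; ext ω; simp [eq_sub_iff_add_eq']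
  have hpt : ∀ k ∉ {k : ℤ | |k - u| = B}, P.map (fun ω => u + Z ω) {k}
      ≤ ENNReal.ofReal (exp (ε / 2)) * P.map (fun ω => w + Z ω) {k} := by
    intro k hk
    rw [hsingleton, hsingleton, ← ENNReal.ofReal_mul (exp_pos _).le]
    exact ENNReal.ofReal_le_ofReal <| tdgeo_le_exp_mul (by positivity) hk <| by
      calc |k - w| = |(k - u) + (u - w)| := by ring_nf
        _ ≤ |k - u| + |u - w| := abs_add_le _ _
        _ ≤ |k - u| + 1 := by gcongr
  have hD : P.map (fun ω => u + Z ω) {k : ℤ | |k - u| = B} = P {ω | |Z ω| = B} := by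
    rw [map_const_add_apply hZ]; simp
  calc P {ω | u + Z ω ∈ S} = P.map (fun ω => u + Z ω) S := (map_const_add_apply hZ u S).symm
    _ ≤ ENNReal.ofReal (exp (ε / 2)) * P.map (fun ω => w + Z ω) S
          + P.map (fun ω => u + Z ω) {k : ℤ | |k - u| = B} :=
        measure_le_mul_add_of_forall_singleton_le hpt S
    _ ≤ _ := by
        rw [map_const_add_apply hZ w S, hD]
        gcongr
        exact measure_abs_eq_le_of_tdgeo hε hδ hB hlaw

end shift

theorem tdgeo_shift_dp_general
    (ε : ℝ) (hε : 0 < ε) (δ : ℝ) (hδ : δ ∈ Set.Ioc (0 : ℝ) 1)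
    (B : ℕ) (hB : (2 / ε) * Real.log (4 / δ) + 1 ≤ (B : ℝ))
    (Ω : Type*) [MeasurableSpace Ω] (P : Measure Ω)
    (Z : Ω → ℤ) (hmeas : Measurable Z)
    (hlaw : ∀ k : ℤ, P {ω | Z ω = k} = ENNReal.ofReal (tdgeo (ε / 2) B k)) :
    ∀ (v : ℤ) (S : Set ℤ),
      P {ω | v + Z ω ∈ S}
          ≤ ENNReal.ofReal (Real.exp (ε / 2)) * P {ω | (v - 1) + Z ω ∈ S}
            + ENNReal.ofReal (δ / 2) ∧
      P {ω | (v - 1) + Z ω ∈ S}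
          ≤ ENNReal.ofReal (Real.exp (ε / 2)) * P {ω | v + Z ω ∈ S}
            + ENNReal.ofReal (δ / 2) := by
  intro v S
  have hB' : 2 / ε * log (4 / δ) ≤ B := by linarith
  exact ⟨measure_const_add_mem_le_of_tdgeo hε hδ.1 hB' hmeas hlaw (by simp) S,
    measure_const_add_mem_le_of_tdgeo hε hδ.1 hB' hmeas hlaw (by simp) S⟩

theorem tdgeo_shift_dp
    (ε : ℝ) (hε : 0 < ε) (δ : ℝ) (hδ : δ ∈ Set.Ioc (0 : ℝ) 1)
    (B : ℕ) (hBpos : 0 < B) (hB : (2 / ε) * Real.log (4 / δ) + 1 ≤ (B : ℝ))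
    (Ω : Type*) [MeasurableSpace Ω] (P : Measure Ω) [IsProbabilityMeasure P]
    (Z : Ω → ℤ) (hmeas : Measurable Z)
    (hlaw : ∀ k : ℤ, P {ω | Z ω = k} = ENNReal.ofReal (tdgeo (ε / 2) B k)) :
    ∀ (v : ℤ) (S : Set ℤ),
      P {ω | v + Z ω ∈ S}
          ≤ ENNReal.ofReal (Real.exp (ε / 2)) * P {ω | (v - 1) + Z ω ∈ S}
            + ENNReal.ofReal (δ / 2) ∧
      P {ω | (v - 1) + Z ω ∈ S}
          ≤ ENNReal.ofReal (Real.exp (ε / 2)) * P {ω | v + Z ω ∈ S}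
            + ENNReal.ofReal (δ / 2) :=
  tdgeo_shift_dp_general ε hε δ hδ B hB Ω P Z hmeas hlaw
end
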